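/- arXiv:1708.06675 — 2 statements merged into one kernel-verified Lean document; each statement's English description precedes it below -/
import Mathlib

section
/- Let n ≥ 3 and n ≤ k. Suppose S is an independent set in G_n^k containing a strict alternating cycle {(x_1,y_1),(x_2,y_2),(x_3,y_3)} with x_1 = a_1 and y_3 = b_{k+2}, satisfying the Disjoint Property, and suppose every pair of S has the form (a_i,b_j) with 1 ≤ i ≤ k+2 and 1 ≤ j ≤ k+2. Then |S| ≤ (k+1)(k+2)/2 + 2 − n. -/
namespace CrownPaper

/-- Indices of the crown `S_n^k` live in `ZMod (n+k)`. The minimal element `a_i` is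
incomparable to the maximal element `b_j` iff `(j - i) mod (n+k) ≤ k`. -/
def Incomp (n k : ℕ) (i j : ZMod (n + k)) : Prop := (j - i).val ≤ k

/-- `a_i < b_j` in the crown `S_n^k` iff `(j - i) mod (n+k) > k`. -/
def CompLt (n k : ℕ) (i j : ZMod (n + k)) : Prop := k < (j - i).val

/-- A pair `(a_i, b_j)` is recorded as its pair of indices. -/
abbrev Pair (n k : ℕ) := ZMod (n + k) × ZMod (n + k)

/-- `(a_i, b_j)` is an incomparable (critical) pair. -/
def IsIncPair (n k : ℕ) (p : Pair n k) : Prop := Incomp n k p.1 p.2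

/-- Adjacency in the graph `G_n^k` of critical pairs: `(a_i,b_j)` and `(a_p,b_q)` are
adjacent iff `a_i < b_q` and `a_p < b_j` in `S_n^k`. -/
def Adj (n k : ℕ) (p q : Pair n k) : Prop :=
  CompLt n k p.1 q.2 ∧ CompLt n k q.1 p.2

/-- An independent set of critical pairs in `G_n^k`. -/
def Indep (n k : ℕ) (S : Set (Pair n k)) : Prop :=
  (∀ p ∈ S, IsIncPair n k p) ∧ ∀ p ∈ S, ∀ q ∈ S, ¬ Adj n k p q

/-- A set of pairs is reversible when some linear extension of the crown (encoded as an
injective map into `ℕ` on the disjoint union `A ⊕ B` preserving all strict comparabilities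
`a_i < b_j`) puts `a` above `b` for every pair `(a,b)` of the set. -/
def Reversible (n k : ℕ) (S : Set (Pair n k)) : Prop :=
  ∃ f : (ZMod (n + k)) ⊕ (ZMod (n + k)) → ℕ,
    Function.Injective f ∧
    (∀ i j : ZMod (n + k), CompLt n k i j → f (Sum.inl i) < f (Sum.inr j)) ∧
    ∀ p ∈ S, f (Sum.inr p.2) < f (Sum.inl p.1)

/-!
On the indices `1 ≤ i, j ≤ k + 2` the order of the crown is `a_1 < b_{k+2}` together with
`a_i < b_j` for `j < i < j + n`. Pairs `(a_i, b_j)` of `S` with `i ≠ 1` and `j ≠ k + 2` become,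
after shifting `i` down by one, pairs in `{1, …, k + 1}²`; a pair and its swap would come from
adjacent pairs, so there are at most `C(k + 1, 2)` of them. The remaining pairs are `(a_1, b_j)`
and `(a_{i+1}, b_{k+2})` for `j ∈ J`, `i ∈ I` with `J, I ⊆ {1, …, k + 1}`, and independence forces
`i < j` or `i > j + n - 2`. The cycle gives some `j ≤ i`; for the closest such `j ≤ i` the
`n - 2` indices strictly between them lie in neither `J` nor `I`, so `|J| + |I| ≤ k + 3 - n`.
-/

open Finset

theorem card_add_card_add_le_of_separated {a b m : ℕ} {J I : Finset ℕ}
    (hJ : J ⊆ Icc a b) (hI : I ⊆ Icc a b) (hsep : ∀ j ∈ J, ∀ i ∈ I, i < j ∨ j + m < i)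
    (hcross : ∃ j ∈ J, ∃ i ∈ I, j ≤ i) :
    #J + #I + m ≤ b + 1 - a := by
  classical
  obtain ⟨⟨j, i⟩, hji, hmin⟩ := exists_min_image ({p ∈ J ×ˢ I | p.1 ≤ p.2})
    (fun p => p.2 - p.1) (by
      obtain ⟨j, hj, i, hi, hle⟩ := hcross
      exact ⟨(j, i), by simp [hj, hi, hle]⟩)
  simp only [mem_filter, mem_product] at hji hmin
  obtain ⟨⟨hj, hi⟩, hle⟩ := hji
  have hgap : j + m < i := (hsep j hj i hi).resolve_left (by omega)
  have hJI : Disjoint J I := disjoint_left.2 fun p hpJ hpI => by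
    have := hsep p hpJ p hpI
    omega
  have hJgap : Disjoint J (Ioo j i) := disjoint_left.2 fun p hp hp' => by
    have := hmin (p, i) ⟨⟨hp, hi⟩, (mem_Ioo.1 hp').2.le⟩
    simp only [mem_Ioo] at hp' this
    omega
  have hIgap : Disjoint I (Ioo j i) := disjoint_left.2 fun p hp hp' => by
    have := hmin (j, p) ⟨⟨hj, hp⟩, (mem_Ioo.1 hp').1.le⟩
    simp only [mem_Ioo] at hp' this
    omega
  have hsub : J ∪ I ∪ Ioo j i ⊆ Icc a b := by
    refine union_subset (union_subset hJ hI) fun p hp => ?_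
    have := mem_Icc.1 (hJ hj)
    have := mem_Icc.1 (hI hi)
    rw [mem_Ioo] at hp
    rw [mem_Icc]
    omega
  have hcard := card_le_card hsub
  rw [card_union_of_disjoint (disjoint_union_left.2 ⟨hJgap, hIgap⟩),
    card_union_of_disjoint hJI, Nat.card_Ioo, Nat.card_Icc] at hcard
  omega

theorem card_le_choose_two_of_swap_notMem {α : Type*} [DecidableEq α] {s : Finset α}
    {P : Finset (α × α)} (hP : P ⊆ s ×ˢ s) (hswap : ∀ p ∈ P, p.swap ∉ P) :
    #P ≤ (#s).choose 2 := by
  have hdisj : Disjoint P (P.image Prod.swap) := disjoint_left.2 fun p hp hp' => by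
    obtain ⟨q, hq, rfl⟩ := mem_image.1 hp'
    exact hswap q hq hp
  have hoff : P ⊆ s.offDiag := fun p hp => by
    have hps := mem_product.1 (hP hp)
    exact mem_offDiag.2 ⟨hps.1, hps.2, fun h => hswap p hp ((Prod.ext h.symm h : p.swap = p) ▸ hp)⟩
  have hsub : P ∪ P.image Prod.swap ⊆ s.offDiag := by
    refine union_subset hoff (image_subset_iff.2 fun p hp => ?_)
    obtain ⟨h1, h2, hne⟩ := mem_offDiag.1 (hoff hp)
    exact mem_offDiag.2 ⟨h2, h1, hne.symm⟩
  have hcard := card_le_card hsub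
  rw [card_union_of_disjoint hdisj, card_image_of_injective _ Prod.swap_injective,
    offDiag_card, ← Nat.mul_sub_one] at hcard
  rw [Nat.choose_two_right]
  omega

def WindowLt (n k a b : ℕ) : Prop := (a = 1 ∧ b = k + 2) ∨ (b < a ∧ a < b + n)

section Window

variable {n k : ℕ} {T : Finset (ℕ × ℕ)}

theorem compLt_natCast_iff {a b : ℕ} (hn : 2 ≤ n) (ha : a ∈ Icc 1 (k + 2))
    (hb : b ∈ Icc 1 (k + 2)) :
    CompLt n k a b ↔ WindowLt n k a b := by
  rw [mem_Icc] at ha hb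
  have : NeZero (n + k) := ⟨by omega⟩
  have hsub : (b : ZMod (n + k)) - a = ((b + (n + k) - a : ℕ) : ZMod (n + k)) := by
    rw [Nat.cast_sub (by omega), Nat.cast_add, ZMod.natCast_self, add_zero]
  rw [CompLt, WindowLt, hsub, ZMod.val_natCast]
  rcases le_or_gt a b with h | h
  · rw [show b + (n + k) - a = b - a + (n + k) by omega, Nat.add_mod_right,
      Nat.mod_eq_of_lt (by omega)]
    omega
  · rw [Nat.mod_eq_of_lt (by omega)]
    omega

-- Shifting `a` down by one turns two adjacent pairs `(a, b)`, `(b + 1, a - 1)` into swaps.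
theorem card_interior_le (hn : 2 ≤ n) (hT : T ⊆ Icc 1 (k + 2) ×ˢ Icc 1 (k + 2))
    (hindep : ∀ p ∈ T, ∀ q ∈ T, ¬ (WindowLt n k p.1 q.2 ∧ WindowLt n k q.1 p.2)) :
    #{q ∈ T | ¬ (q.1 = 1 ∨ q.2 = k + 2)} ≤ (k + 1).choose 2 := by
  set C := {q ∈ T | ¬ (q.1 = 1 ∨ q.2 = k + 2)}
  have hC : ∀ q ∈ C, q ∈ T ∧ 2 ≤ q.1 ∧ q.1 ≤ k + 2 ∧ 1 ≤ q.2 ∧ q.2 ≤ k + 1 := fun q hq => by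
    obtain ⟨hqT, hq⟩ := mem_filter.1 hq
    have := mem_product.1 (hT hqT)
    simp only [mem_Icc] at this
    exact ⟨hqT, by omega⟩
  have hinj : Set.InjOn (fun q : ℕ × ℕ => (q.1 - 1, q.2)) C := fun q hq r hr h => by
    have := hC q hq
    have := hC r hr
    simp only [Prod.mk.injEq] at h
    exact Prod.ext (by omega) h.2
  calc #C = #(C.image fun q => (q.1 - 1, q.2)) := (card_image_of_injOn hinj).symm
    _ ≤ (#(Icc 1 (k + 1))).choose 2 := by
      refine card_le_choose_two_of_swap_notMem (fun p hp => ?_) (fun p hp hp' => ?_)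
      · obtain ⟨q, hq, rfl⟩ := mem_image.1 hp
        have := hC q hq
        simp only [mem_product, mem_Icc]
        omega
      · obtain ⟨q, hq, rfl⟩ := mem_image.1 hp
        obtain ⟨r, hr, hrq⟩ := mem_image.1 hp'
        simp only [Prod.swap_prod_mk, Prod.mk.injEq] at hrq
        obtain ⟨hqT, hq⟩ := hC q hq
        obtain ⟨hrT, hr⟩ := hC r hr
        exact hindep q hqT r hrT (by simp only [WindowLt]; omega)
    _ = (k + 1).choose 2 := by simp

theorem card_border_add_le (hn : 2 ≤ n) (hT : T ⊆ Icc 1 (k + 2) ×ˢ Icc 1 (k + 2))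
    (hindep : ∀ p ∈ T, ∀ q ∈ T, ¬ (WindowLt n k p.1 q.2 ∧ WindowLt n k q.1 p.2))
    (hcross : ∃ j i, j < i ∧ (1, j) ∈ T ∧ (i, k + 2) ∈ T) :
    #{q ∈ T | q.1 = 1 ∨ q.2 = k + 2} + n ≤ k + 3 := by
  classical
  set J := {j ∈ Icc 1 (k + 1) | (1, j) ∈ T}
  set I := {i ∈ Icc 1 (k + 1) | (i + 1, k + 2) ∈ T}
  have hcover : {q ∈ T | q.1 = 1 ∨ q.2 = k + 2} ⊆
      J.image (fun j => (1, j)) ∪ I.image (fun i => (i + 1, k + 2)) := by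
    rintro ⟨a, b⟩ hq
    obtain ⟨hqT, hq⟩ := mem_filter.1 hq
    have hrange := mem_product.1 (hT hqT)
    have hself := hindep _ hqT _ hqT
    simp only [mem_Icc, WindowLt] at hrange hself
    simp only [mem_union, mem_image, mem_filter, mem_Icc, Prod.mk.injEq, J, I]
    rcases hq with rfl | rfl
    · exact Or.inl ⟨b, ⟨by omega, hqT⟩, rfl, rfl⟩
    · exact Or.inr ⟨a - 1, ⟨by omega, by rwa [Nat.sub_add_cancel (by omega)]⟩, by omega, rfl⟩
  have hsep : ∀ j ∈ J, ∀ i ∈ I, i < j ∨ j + (n - 2) < i := fun j hj i hi => by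
    have := hindep _ (mem_filter.1 hj).2 _ (mem_filter.1 hi).2
    simp only [WindowLt, and_self, true_or, true_and] at this
    omega
  have hJI : #J + #I + (n - 2) ≤ k + 1 + 1 - 1 := by
    refine card_add_card_add_le_of_separated (filter_subset _ _) (filter_subset _ _) hsep ?_
    obtain ⟨j, i, hji, hj, hi⟩ := hcross
    have hj' := mem_product.1 (hT hj)
    have hi' := mem_product.1 (hT hi)
    simp only [mem_Icc] at hj' hi'
    refine ⟨j, mem_filter.2 ⟨mem_Icc.2 (by omega), hj⟩, i - 1,
      mem_filter.2 ⟨mem_Icc.2 (by omega), by rwa [Nat.sub_add_cancel (by omega)]⟩, by omega⟩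
  have hborder := (card_le_card hcover).trans
    ((card_union_le _ _).trans (add_le_add card_image_le card_image_le))
  omega

theorem card_add_le_of_window (hn : 2 ≤ n) (hT : T ⊆ Icc 1 (k + 2) ×ˢ Icc 1 (k + 2))
    (hindep : ∀ p ∈ T, ∀ q ∈ T, ¬ (WindowLt n k p.1 q.2 ∧ WindowLt n k q.1 p.2))
    (hcross : ∃ j i, j < i ∧ (1, j) ∈ T ∧ (i, k + 2) ∈ T) :
    #T + n ≤ (k + 1) * (k + 2) / 2 + 2 := by
  have hsplit := card_filter_add_card_filter_not (s := T) fun q => q.1 = 1 ∨ q.2 = k + 2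
  have hborder := card_border_add_le hn hT hindep hcross
  have hinterior := card_interior_le hn hT hindep
  have htriangle : (k + 1) * (k + 2) / 2 = (k + 1).choose 2 + (k + 1) := by
    rw [Nat.choose_two_right, add_tsub_cancel_right, ← Nat.add_mul_div_right _ _ two_pos]
    ring_nf
  omega

end Window

open Classical in
noncomputable def windowIndices (n k : ℕ) (S : Set (Pair n k)) : Finset (ℕ × ℕ) :=
  {q ∈ Icc 1 (k + 2) ×ˢ Icc 1 (k + 2) | ((q.1 : ZMod (n + k)), (q.2 : ZMod (n + k))) ∈ S}

section Crown

variable {n k : ℕ} {S : Set (Pair n k)}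

theorem mem_windowIndices {q : ℕ × ℕ} :
    q ∈ windowIndices n k S ↔
      q ∈ Icc 1 (k + 2) ×ˢ Icc 1 (k + 2) ∧ ((q.1 : ZMod (n + k)), (q.2 : ZMod (n + k))) ∈ S := by
  classical
  simp only [windowIndices, mem_filter]

theorem ncard_le_card_windowIndices
    (hrange : ∀ p ∈ S, ∃ a b : ℕ, 1 ≤ a ∧ a ≤ k + 2 ∧ 1 ≤ b ∧ b ≤ k + 2 ∧
      p = (((a : ℕ) : ZMod (n + k)), ((b : ℕ) : ZMod (n + k)))) :
    S.ncard ≤ #(windowIndices n k S) := by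
  classical
  have hsub : S ⊆ ((windowIndices n k S).image
      fun q => ((q.1 : ZMod (n + k)), (q.2 : ZMod (n + k))) : Set (Pair n k)) := by
    intro p hp
    obtain ⟨a, b, ha, ha', hb, hb', rfl⟩ := hrange p hp
    simp only [coe_image, Set.mem_image, mem_coe]
    exact ⟨(a, b), mem_windowIndices.2 ⟨by simp [ha, ha', hb, hb'], hp⟩, rfl⟩
  calc S.ncard ≤ #((windowIndices n k S).image
        fun q => ((q.1 : ZMod (n + k)), (q.2 : ZMod (n + k)))) := by
        rw [← Set.ncard_coe_finset]
        exact Set.ncard_le_ncard hsub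
    _ ≤ #(windowIndices n k S) := card_image_le

theorem windowIndices_not_adj (hn : 2 ≤ n) (hS : Indep n k S) :
    ∀ p ∈ windowIndices n k S, ∀ q ∈ windowIndices n k S,
      ¬ (WindowLt n k p.1 q.2 ∧ WindowLt n k q.1 p.2) := by
  intro p hp q hq
  rw [mem_windowIndices, mem_product] at hp hq
  rw [← compLt_natCast_iff hn hp.1.1 hq.1.2, ← compLt_natCast_iff hn hq.1.1 hp.1.2]
  exact hS.2 _ hp.2 _ hq.2

end Crown

theorem indep_with_sac_card_bound_general (n k : ℕ) (hn : 3 ≤ n)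
    (S : Set (Pair n k)) (hS : Indep n k S)
    (x y : ZMod 3 → ZMod (n + k))
    (hmem : ∀ α : ZMod 3, (x α, y α) ∈ S)
    (hx1 : x 0 = (1 : ZMod (n + k)))
    (hy3 : y 2 = ((k + 2 : ℕ) : ZMod (n + k)))
    (hdisj : (x 0 - x 0).val ≤ (y 0 - x 0).val ∧
      (y 0 - x 0).val < (x 1 - x 0).val ∧
      (x 1 - x 0).val ≤ (y 1 - x 0).val ∧
      (y 1 - x 0).val < (x 2 - x 0).val ∧
      (x 2 - x 0).val ≤ (y 2 - x 0).val)
    (hrange : ∀ p ∈ S, ∃ a b : ℕ, 1 ≤ a ∧ a ≤ k + 2 ∧ 1 ≤ b ∧ b ≤ k + 2 ∧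
      p = (((a : ℕ) : ZMod (n + k)), ((b : ℕ) : ZMod (n + k)))) :
    S.ncard + n ≤ (k + 1) * (k + 2) / 2 + 2 := by
  have : NeZero (n + k) := ⟨by omega⟩
  have hshift (z : ZMod (n + k)) : ((1 + (z - x 0).val : ℕ) : ZMod (n + k)) = z := by
    rw [Nat.cast_add, ZMod.natCast_zmod_val, Nat.cast_one, ← hx1, add_sub_cancel]
  obtain ⟨-, hy0x1, hx1y1, hy1x2, hx2y2⟩ := hdisj
  have hy2 : (y 2 - x 0).val = k + 1 := by
    rw [hy3, hx1, show ((k + 2 : ℕ) : ZMod (n + k)) - 1 = ((k + 1 : ℕ) : ZMod (n + k)) by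
      push_cast; ring, ZMod.val_natCast_of_lt (by omega)]
  have h0 : (1, 1 + (y 0 - x 0).val) ∈ windowIndices n k S := by
    refine mem_windowIndices.2 ⟨by simp only [mem_product, mem_Icc]; omega, ?_⟩
    rw [hshift, Nat.cast_one, ← hx1]
    exact hmem 0
  have h2 : (1 + (x 2 - x 0).val, k + 2) ∈ windowIndices n k S := by
    refine mem_windowIndices.2 ⟨by simp only [mem_product, mem_Icc]; omega, ?_⟩
    rw [hshift, ← hy3]
    exact hmem 2
  calc S.ncard + n ≤ #(windowIndices n k S) + n :=
        Nat.add_le_add_right (ncard_le_card_windowIndices hrange) n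
    _ ≤ (k + 1) * (k + 2) / 2 + 2 :=
        card_add_le_of_window (by omega) (fun _ hq => (mem_windowIndices.1 hq).1)
          (windowIndices_not_adj (by omega) hS) ⟨_, _, by omega, h0, h2⟩

/-- for `3 ≤ n ≤ k`, an independent set `S` in `G_n^k` containing a strict
alternating cycle of size `3` with the Disjoint Property, `x₁ = a₁` and `y₃ = b_{k+2}`,
all of whose pairs `(a_i, b_j)` have `1 ≤ i, j ≤ k+2`, satisfies
`|S| ≤ (k+1)(k+2)/2 + 2 − n`. -/
theorem indep_with_sac_card_bound (n k : ℕ) (hn : 3 ≤ n) (hnk : n ≤ k)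
    (S : Set (Pair n k)) (hS : Indep n k S)
    (x y : ZMod 3 → ZMod (n + k))
    (hmem : ∀ α : ZMod 3, (x α, y α) ∈ S)
    (hstrict : ∀ α β : ZMod 3, (CompLt n k (x α) (y β) ↔ β = α - 1))
    (hx1 : x 0 = (1 : ZMod (n + k)))
    (hy3 : y 2 = ((k + 2 : ℕ) : ZMod (n + k)))
    (hdisj : (x 0 - x 0).val ≤ (y 0 - x 0).val ∧
      (y 0 - x 0).val < (x 1 - x 0).val ∧
      (x 1 - x 0).val ≤ (y 1 - x 0).val ∧
      (y 1 - x 0).val < (x 2 - x 0).val ∧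
      (x 2 - x 0).val ≤ (y 2 - x 0).val)
    (hrange : ∀ p ∈ S, ∃ a b : ℕ, 1 ≤ a ∧ a ≤ k + 2 ∧ 1 ≤ b ∧ b ≤ k + 2 ∧
      p = (((a : ℕ) : ZMod (n + k)), ((b : ℕ) : ZMod (n + k)))) :
    S.ncard + n ≤ (k + 1) * (k + 2) / 2 + 2 :=
  indep_with_sac_card_bound_general n k hn S hS x y hmem hx1 hy3 hdisj hrange

end CrownPaper
end

section
/- Let n ≥ 3 and k ≥ 0, and let G_n^k be the graph of critical pairs of the crown S_n^k. Then the independence number of G_n^k equals (k+1)(k+2)/2, and consequently the chromatic number of G_n^k is at least ⌈2(n+k)/(k+2)⌉. -/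
/-!
Group the pairs `(a_i, b_j)` of an independent set `F` by their minimal element: for each index
`i` that occurs, the indices `j` paired with it (`partners F i`) lie in the cyclic window
`[i, i + k]`. Let `dominated F i` be the set of other occurring indices `i'` whose window
`[i', i' + k]` also contains all partners of `i`. Minimal elements whose windows share a common set
`B` of maximal elements number at most `k + 2 - |B|`, so `|partners F i| + |dominated F i| ≤ k + 1`.
Two non-adjacent pairs `(a_i, b_j)`, `(a_i', b_j')` have `a_i ∥ b_j'` or `a_i' ∥ b_j`, so of two
distinct occurring indices one dominates the other, and the `r` occurring indices carry at least
`r (r - 1) / 2` dominations. Hence `|F| ≤ r (k + 1) - r (r - 1) / 2 ≤ (k + 1) (k + 2) / 2`.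
The pairs `(a_i, b_j)` with `0 ≤ i ≤ j ≤ k` attain the bound, and as `G_n^k` has `(n + k)(k + 1)`
vertices, each colour class of a proper colouring covers at most `(k + 1) (k + 2) / 2` of them.
-/

namespace CrownPaper

/-- The graph `G_n^k` of critical pairs of the crown `S_n^k`, as a simple graph on the
incomparable pairs. -/
def CrownGraph (n k : ℕ) : SimpleGraph {p : Pair n k // IsIncPair n k p} where
  Adj p q := CompLt n k p.1.1 q.1.2 ∧ CompLt n k q.1.1 p.1.2
  symm := by constructor; intro p q h; exact ⟨h.2, h.1⟩
  loopless := by constructor; intro p h; exact absurd h.1 (not_lt.mpr p.2)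

section Window

variable {m k : ℕ} [NeZero m]

theorem val_sub_le_of_val_le {a b : ZMod m} (hab : a.val ≤ b.val) (hb : b.val ≤ k) :
    (b - a).val ≤ k := by
  rw [ZMod.val_sub hab]
  omega

theorem card_le_of_forall_val_sub_le {a : ZMod m} {B : Finset (ZMod m)}
    (h : ∀ b ∈ B, (b - a).val ≤ k) : B.card ≤ k + 1 := by
  simpa using Finset.card_le_card_of_injOn (fun b => (b - a).val)
    (fun b hb => Finset.mem_range.mpr (Nat.lt_succ_of_le (h b hb)))
    (fun b _ b' _ hbb' => sub_left_inj.mp (ZMod.val_injective m hbb'))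

theorem exists_erase_insert_forall_val_sub_le (hm : k + 2 ≤ m) {A B : Finset (ZMod m)}
    (hA : A.Nonempty) {x : ZMod m} (hx : x ∈ B) (h : ∀ a ∈ A, ∀ b ∈ B, (b - a).val ≤ k) :
    ∃ a₀ ∈ A, a₀ - 1 ∉ B ∧ ∀ a ∈ A.erase a₀, ∀ b ∈ insert (a₀ - 1) B, (b - a).val ≤ k := by
  have : Fact (1 < m) := ⟨by omega⟩
  -- `a₀` is the element of `A` closest below `x`, so `a₀ - 1` is still in the window of the others.
  obtain ⟨a₀, ha₀, hmin⟩ := A.exists_min_image (fun a => (x - a).val) hA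
  refine ⟨a₀, ha₀, fun hB => ?_, fun a ha b hb => ?_⟩
  · have := h a₀ ha₀ _ hB
    rw [sub_sub_cancel_left, ZMod.val_neg_of_ne_zero, ZMod.val_one] at this
    omega
  obtain ⟨hne, ha⟩ := Finset.mem_erase.mp ha
  obtain rfl | hb := Finset.mem_insert.mp hb
  · have hlt : (x - a₀).val < (x - a).val :=
      (hmin a ha).lt_of_ne fun heq => hne (sub_right_inj.mp (ZMod.val_injective m heq)).symm
    have hgap : (a₀ - a).val = (x - a).val - (x - a₀).val := by
      rw [← ZMod.val_sub hlt.le, sub_sub_sub_cancel_left]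
    have hshift : (a₀ - 1 - a).val = (a₀ - a).val - 1 := by
      rw [sub_right_comm, ZMod.val_sub (by rw [ZMod.val_one]; omega), ZMod.val_one]
    have := h a ha x hx
    omega
  · exact h a ha b hb

theorem card_add_card_le_of_forall_val_sub_le (hm : k + 2 ≤ m) {A B : Finset (ZMod m)}
    (hA : A.Nonempty) (hB : B.Nonempty) (h : ∀ a ∈ A, ∀ b ∈ B, (b - a).val ≤ k) :
    A.card + B.card ≤ k + 2 := by
  induction A using Finset.strongInduction generalizing B with
  | H A ih =>
    obtain ⟨a, rfl⟩ | hA₂ := hA.exists_eq_singleton_or_nontrivial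
    · have := card_le_of_forall_val_sub_le (h a (Finset.mem_singleton_self a))
      rw [Finset.card_singleton]
      omega
    obtain ⟨x, hx⟩ := hB
    obtain ⟨a₀, ha₀, hnotin, h'⟩ := exists_erase_insert_forall_val_sub_le hm hA hx h
    have := ih _ (Finset.erase_ssubset ha₀) (hA₂.erase_nonempty) (Finset.insert_nonempty _ _) h'
    rw [Finset.card_insert_of_notMem hnotin, Finset.card_erase_of_mem ha₀] at this
    have := Finset.one_lt_card_iff_nontrivial.mpr hA₂
    omega

end Window

theorem _root_.Finset.card_mul_card_sub_one_le_two_mul_sum_card {α : Type*} [DecidableEq α]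
    (I : Finset α) (D : α → Finset α) (h : ∀ i ∈ I, ∀ j ∈ I, i ≠ j → j ∈ D i ∨ i ∈ D j) :
    I.card * (I.card - 1) ≤ 2 * ∑ i ∈ I, (D i).card := by
  set Q := I.biUnion fun i => {i} ×ˢ D i
  have hQ : Q.card ≤ ∑ i ∈ I, (D i).card := by
    refine Finset.card_biUnion_le.trans (le_of_eq (Finset.sum_congr rfl fun i _ => ?_))
    rw [Finset.card_product, Finset.card_singleton, one_mul]
  have hcover : I.offDiag ⊆ Q ∪ Q.image Prod.swap := by
    intro z hz
    obtain ⟨h₁, h₂, hne⟩ := Finset.mem_offDiag.mp hz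
    rcases h z.1 h₁ z.2 h₂ hne with hz | hz
    · exact Finset.mem_union_left _ (Finset.mem_biUnion.mpr
        ⟨z.1, h₁, Finset.mem_product.mpr ⟨Finset.mem_singleton_self _, hz⟩⟩)
    · exact Finset.mem_union_right _ (Finset.mem_image.mpr ⟨z.swap, Finset.mem_biUnion.mpr
        ⟨z.2, h₂, Finset.mem_product.mpr ⟨Finset.mem_singleton_self _, hz⟩⟩, rfl⟩)
  have := (Finset.card_le_card hcover).trans (Finset.card_union_le _ _)
  rw [Finset.offDiag_card, ← Nat.mul_sub_one] at this
  have := Finset.card_image_le (s := Q) (f := Prod.swap)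
  omega

theorem _root_.Nat.two_mul_mul_succ_le (r k : ℕ) :
    2 * (r * (k + 1)) ≤ (k + 1) * (k + 2) + r * (r - 1) := by
  have key : (0 : ℤ) ≤ ((r : ℤ) - (k + 1)) * ((r : ℤ) - (k + 2)) := by
    rcases le_or_gt r (k + 1) with h | h
    · apply mul_nonneg_of_nonpos_of_nonpos <;> omega
    · apply mul_nonneg <;> omega
  rcases Nat.eq_zero_or_pos r with rfl | hr
  · simp
  zify [hr]
  linarith

theorem _root_.SimpleGraph.Colorable.natCard_le_mul {V : Type*} {G : SimpleGraph V} {c a : ℕ}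
    (hc : G.Colorable c) (ha : ∀ s : Set V, G.IsIndepSet s → s.ncard ≤ a) :
    Nat.card V ≤ c * a := by
  obtain ⟨C⟩ := hc
  have hcover : (⋃ x, C.colorClass x) = Set.univ :=
    Set.iUnion_eq_univ_iff.mpr fun v => ⟨C v, C.mem_colorClass v⟩
  calc Nat.card V = (⋃ x, C.colorClass x).ncard := by rw [hcover, Set.ncard_univ]
    _ ≤ ∑ x, (C.colorClass x).ncard := Set.ncard_iUnion_le_of_fintype _
    _ ≤ ∑ _x : Fin c, a := Finset.sum_le_sum fun x _ => ha _ (C.isIndepSet_colorClass x)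
    _ = c * a := by simp

section Crown

variable {n k : ℕ}

theorem not_adj_iff {p q : Pair n k} :
    ¬ Adj n k p q ↔ (q.2 - p.1).val ≤ k ∨ (p.2 - q.1).val ≤ k := by
  rw [Adj, CompLt, CompLt, not_and_or, not_lt, not_lt]

def partners (F : Finset (Pair n k)) (i : ZMod (n + k)) : Finset (ZMod (n + k)) :=
  {p ∈ F | p.1 = i}.image Prod.snd

def dominated (F : Finset (Pair n k)) (i : ZMod (n + k)) : Finset (ZMod (n + k)) :=
  {i' ∈ (F.image Prod.fst).erase i | ∀ j ∈ partners F i, (j - i').val ≤ k}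

theorem mem_partners {F : Finset (Pair n k)} {i j : ZMod (n + k)} :
    j ∈ partners F i ↔ (i, j) ∈ F := by
  simp [partners]

theorem mem_dominated {F : Finset (Pair n k)} {i i' : ZMod (n + k)} :
    i' ∈ dominated F i ↔ i' ∈ (F.image Prod.fst).erase i ∧ ∀ j ∈ partners F i, (j - i').val ≤ k :=
  Finset.mem_filter

theorem card_eq_sum_card_partners (F : Finset (Pair n k)) :
    F.card = ∑ i ∈ F.image Prod.fst, (partners F i).card := by
  rw [Finset.card_eq_sum_card_image Prod.fst F]
  refine Finset.sum_congr rfl fun i _ => (Finset.card_image_of_injOn ?_).symm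
  intro p hp q hq hpq
  simp only [Finset.coe_filter, Set.mem_ofPred_eq] at hp hq
  exact Prod.ext (hp.2.trans hq.2.symm) hpq

theorem card_partners_add_card_dominated_le (hn : 2 ≤ n) {F : Finset (Pair n k)}
    (hF : ∀ p ∈ F, IsIncPair n k p) {i : ZMod (n + k)} (hi : i ∈ F.image Prod.fst) :
    (partners F i).card + (dominated F i).card ≤ k + 1 := by
  have : NeZero (n + k) := ⟨by omega⟩
  obtain ⟨j, hj⟩ : (partners F i).Nonempty := by
    obtain ⟨p, hp, rfl⟩ := Finset.mem_image.mp hi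
    exact ⟨p.2, mem_partners.mpr hp⟩
  have hwindow : ∀ a ∈ insert i (dominated F i), ∀ b ∈ partners F i, (b - a).val ≤ k := by
    intro a ha b hb
    obtain rfl | ha := Finset.mem_insert.mp ha
    · exact hF _ (mem_partners.mp hb)
    · exact (mem_dominated.mp ha).2 b hb
  have := card_add_card_le_of_forall_val_sub_le (m := n + k) (by omega)
    (Finset.insert_nonempty _ _) ⟨j, hj⟩ hwindow
  have hi_not : i ∉ dominated F i := fun h => (Finset.mem_erase.mp (mem_dominated.mp h).1).1 rfl
  rw [Finset.card_insert_of_notMem hi_not] at this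
  omega

theorem mem_dominated_or_mem_dominated {F : Finset (Pair n k)}
    (hF : ∀ p ∈ F, ∀ q ∈ F, ¬ Adj n k p q) {i i' : ZMod (n + k)} (hi : i ∈ F.image Prod.fst)
    (hi' : i' ∈ F.image Prod.fst) (hne : i ≠ i') : i' ∈ dominated F i ∨ i ∈ dominated F i' := by
  by_contra! hcon
  simp only [mem_dominated, Finset.mem_erase, not_and, not_forall, not_le] at hcon
  obtain ⟨j, hj, hjk⟩ := hcon.1 ⟨hne.symm, hi'⟩
  obtain ⟨j', hj', hjk'⟩ := hcon.2 ⟨hne, hi⟩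
  have : (j' - i).val ≤ k ∨ (j - i').val ≤ k :=
    not_adj_iff.mp (hF _ (mem_partners.mp hj) _ (mem_partners.mp hj'))
  omega

theorem two_mul_card_le_of_indep (hn : 2 ≤ n) {F : Finset (Pair n k)} (hF : Indep n k F) :
    2 * F.card ≤ (k + 1) * (k + 2) := by
  set I := F.image Prod.fst
  have htotal : F.card + ∑ i ∈ I, (dominated F i).card ≤ I.card * (k + 1) := by
    rw [card_eq_sum_card_partners, ← Finset.sum_add_distrib]
    refine (Finset.sum_le_sum fun i hi => ?_).trans_eq (by rw [Finset.sum_const, smul_eq_mul])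
    exact card_partners_add_card_dominated_le hn hF.1 hi
  have := I.card_mul_card_sub_one_le_two_mul_sum_card (dominated F) fun i hi i' hi' =>
    mem_dominated_or_mem_dominated hF.2 hi hi'
  have := Nat.two_mul_mul_succ_le I.card k
  omega

theorem ncard_le_of_forall_not_adj (hn : 2 ≤ n) {S : Set {p : Pair n k // IsIncPair n k p}}
    (hS : ∀ p ∈ S, ∀ q ∈ S, ¬ (CrownGraph n k).Adj p q) :
    S.ncard ≤ (k + 1) * (k + 2) / 2 := by
  have : NeZero (n + k) := ⟨by omega⟩
  obtain ⟨F, hF⟩ := (Set.toFinite (Subtype.val '' S)).exists_finset_coe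
  have hcard : S.ncard = F.card := by
    rw [← Set.ncard_image_of_injective S Subtype.val_injective, ← hF, Set.ncard_coe_finset]
  have hind : Indep n k F := by
    rw [hF]
    refine ⟨?_, ?_⟩
    · rintro _ ⟨p, -, rfl⟩
      exact p.2
    · rintro _ ⟨p, hp, rfl⟩ _ ⟨q, hq, rfl⟩
      exact hS p hp q hq
  have := two_mul_card_le_of_indep hn hind
  omega

def canonicalSet (n k : ℕ) : Set (Pair n k) := {p | p.1.val ≤ p.2.val ∧ p.2.val ≤ k}

theorem indep_canonicalSet [NeZero (n + k)] : Indep n k (canonicalSet n k) := by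
  refine ⟨fun p hp => val_sub_le_of_val_le hp.1 hp.2, fun p ⟨hp, hp'⟩ q ⟨hq, hq'⟩ ⟨h₁, h₂⟩ => ?_⟩
  by_cases h : p.1.val ≤ q.2.val
  · exact (val_sub_le_of_val_le h hq').not_gt h₁
  · exact (val_sub_le_of_val_le (by omega : q.1.val ≤ p.2.val) hp').not_gt h₂

theorem ncard_canonicalSet (hn : 0 < n) :
    (canonicalSet n k).ncard = (k + 1) * (k + 2) / 2 := by
  have : NeZero (n + k) := ⟨by omega⟩
  have hval (t : Fin (k + 1)) : ((t : ℕ) : ZMod (n + k)).val = t := ZMod.val_cast_of_lt (by omega)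
  let φ (q : {q : Fin (k + 1) × Fin (k + 1) // q.1 ≤ q.2}) : Pair n k := (q.1.1.val, q.1.2.val)
  have hφ : Function.Injective φ := fun q q' h => by
    have h₁ := congrArg (fun p => p.1.val) h
    have h₂ := congrArg (fun p => p.2.val) h
    simp only [φ, hval] at h₁ h₂
    exact Subtype.ext (Prod.ext (Fin.ext h₁) (Fin.ext h₂))
  have hrange : Set.range φ = canonicalSet n k := by
    ext p
    constructor
    · rintro ⟨q, rfl⟩
      simp only [canonicalSet, φ, Set.mem_ofPred_eq, hval]
      exact ⟨q.2, Nat.lt_succ_iff.mp q.1.2.2⟩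
    · rintro ⟨h₁, h₂⟩
      refine ⟨⟨(⟨p.1.val, by omega⟩, ⟨p.2.val, by omega⟩), h₁⟩, ?_⟩
      simp [φ]
  rw [← hrange, Set.ncard_range_of_injective hφ, Nat.card_congr Sym2.sortEquiv.symm,
    Nat.card_eq_fintype_card, Sym2.card, Fintype.card_fin, Nat.choose_two_right, mul_comm]
  rfl

theorem exists_forall_not_adj_ncard_eq (hn : 0 < n) :
    ∃ S : Set {p : Pair n k // IsIncPair n k p},
      (∀ p ∈ S, ∀ q ∈ S, ¬ (CrownGraph n k).Adj p q) ∧ S.ncard = (k + 1) * (k + 2) / 2 := by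
  have : NeZero (n + k) := ⟨by omega⟩
  refine ⟨Subtype.val ⁻¹' canonicalSet n k,
    fun p hp q hq => indep_canonicalSet.2 p.1 hp q.1 hq, ?_⟩
  rw [Set.ncard_preimage_of_injective_subset_range Subtype.val_injective
    fun p hp => ⟨⟨p, indep_canonicalSet.1 p hp⟩, rfl⟩, ncard_canonicalSet hn]

theorem natCard_incPair (hn : 0 < n) :
    Nat.card {p : Pair n k // IsIncPair n k p} = (n + k) * (k + 1) := by
  have : NeZero (n + k) := ⟨by omega⟩
  let ψ (p : {p : Pair n k // IsIncPair n k p}) : ZMod (n + k) × Fin (k + 1) :=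
    (p.1.1, ⟨(p.1.2 - p.1.1).val, Nat.lt_succ_of_le p.2⟩)
  have hψ : Function.Bijective ψ := by
    refine ⟨fun p q h => ?_, fun ⟨i, t⟩ => ?_⟩
    · simp only [ψ, Prod.mk.injEq, Fin.mk.injEq] at h
      have h₂ := ZMod.val_injective _ h.2
      rw [h.1, sub_left_inj] at h₂
      exact Subtype.ext (Prod.ext h.1 h₂)
    · have ht : ((t : ℕ) : ZMod (n + k)).val = t := ZMod.val_cast_of_lt (by omega)
      refine ⟨⟨(i, i + (t : ℕ)), ?_⟩, ?_⟩
      · show ((i + (t : ℕ)) - i).val ≤ k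
        rw [add_sub_cancel_left, ht]
        exact Nat.lt_succ_iff.mp t.2
      · simp [ψ, ht]
  rw [Nat.card_eq_of_bijective ψ hψ, Nat.card_prod, Nat.card_zmod, Nat.card_fin]

theorem le_chromaticNumber_crownGraph (hn : 2 ≤ n) :
    (((2 * (n + k) + k + 1) / (k + 2) : ℕ) : ℕ∞) ≤ (CrownGraph n k).chromaticNumber := by
  refine SimpleGraph.le_chromaticNumber_iff_colorable.mpr fun c hc => ?_
  have hV := hc.natCard_le_mul fun s hs =>
    ncard_le_of_forall_not_adj hn fun p hp q hq hpq => hs hp hq (SimpleGraph.ne_of_adj _ hpq) hpq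
  rw [natCard_incPair (by omega)] at hV
  have htri : (k + 1) * (k + 2) / 2 * 2 = (k + 1) * (k + 2) :=
    Nat.div_mul_cancel (Nat.even_mul_succ_self (k + 1)).two_dvd
  have : 2 * (n + k) * (k + 1) ≤ (k + 2) * c * (k + 1) :=
    calc 2 * (n + k) * (k + 1) = 2 * ((n + k) * (k + 1)) := by ring
      _ ≤ 2 * (c * ((k + 1) * (k + 2) / 2)) := by omega
      _ = (k + 2) * c * (k + 1) := by rw [mul_left_comm, mul_comm 2, htri]; ring
  have := Nat.le_of_mul_le_mul_right this k.succ_pos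
  rw [Nat.div_le_iff_le_mul_add_pred (by omega)]
  omega

end Crown

/-- the independence number of `G_n^k` equals `(k+1)(k+2)/2`, and
consequently its chromatic number is at least `⌈2(n+k)/(k+2)⌉`. -/
theorem indepNum_and_chromatic (n k : ℕ) (hn : 3 ≤ n) :
    (∃ S : Set {p : Pair n k // IsIncPair n k p},
      (∀ p ∈ S, ∀ q ∈ S, ¬ (CrownGraph n k).Adj p q) ∧
      S.ncard = (k + 1) * (k + 2) / 2) ∧
    (∀ S : Set {p : Pair n k // IsIncPair n k p},
      (∀ p ∈ S, ∀ q ∈ S, ¬ (CrownGraph n k).Adj p q) →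
      S.ncard ≤ (k + 1) * (k + 2) / 2) ∧
    (((2 * (n + k) + k + 1) / (k + 2) : ℕ) : ℕ∞) ≤ (CrownGraph n k).chromaticNumber :=
  ⟨exists_forall_not_adj_ncard_eq (by omega), fun _ => ncard_le_of_forall_not_adj (by omega),
    le_chromaticNumber_crownGraph (by omega)⟩

end CrownPaper
end
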